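/- arXiv:1809.03117 — 2 statements merged into one kernel-verified Lean document; each statement's English description precedes it below -/
import Mathlib

section
/- Let M, K ≥ 1 be integers, β_1,…,β_K > 0 and p_1,…,p_K ≥ 0. Let G be a random M×K complex matrix whose MK entries are independent, with entry (m,n) distributed CN(0,β_n). Let P = diag(p_1,…,p_K) and let diag(A) denote the diagonal matrix retaining only the diagonal entries of a square matrix A. Then for every n ∈ {1,…,K}, with g_n the n-th column of G, E[ g_n^H · diag(G P G^H) · g_n ] = M β_n ( ∑_{i=1}^K p_i β_i + p_n β_n ). -/
/- Expanding the quadratic form gives `∑ₘ ∑ᵢ pᵢ |Gₘᵢ|² |Gₘₙ|²`. For `i ≠ n` the two factors are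
independent, so the term has mean `βᵢ βₙ`; for `i = n` it is `|Gₘₙ|⁴`, whose mean is `2 βₙ²`
because `|z|² = x² + y²` with `x, y` independent `N(0, β/2)` and `E x⁴ = 3 (β/2)²`. -/

open MeasureTheory ProbabilityTheory Matrix

/-- The circularly symmetric complex Gaussian distribution `CN(0, β)` on `ℂ`:
the law of `x + i·y` where `x, y` are independent real Gaussians with mean `0`
and variance `β/2`. -/
noncomputable def complexGaussian (β : ℝ) : Measure ℂ :=
  ((gaussianReal 0 (β / 2).toNNReal).prod (gaussianReal 0 (β / 2).toNNReal)).map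
    (fun p : ℝ × ℝ => (p.1 : ℂ) + Complex.I * (p.2 : ℂ))

open Real
open scoped NNReal Nat

lemma integral_even_pow_mul_exp_neg_mul_sq {b : ℝ} (hb : 0 < b) (k : ℕ) :
    ∫ x : ℝ, x ^ (2 * k) * exp (-b * x ^ 2) = b ^ (-(k + 1 / 2 : ℝ)) * Gamma (k + 1 / 2) := by
  have h_even : (fun x : ℝ ↦ x ^ (2 * k) * exp (-b * x ^ 2))
      = fun x ↦ |x| ^ (2 * k) * exp (-b * |x| ^ 2) := by
    ext x; rw [pow_mul, pow_mul, sq_abs]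
  have h_rpow : ∫ x in Set.Ioi (0 : ℝ), x ^ (2 * k) * exp (-b * x ^ 2)
      = ∫ x in Set.Ioi (0 : ℝ), x ^ (2 * (k : ℝ)) * exp (-b * x ^ (2 : ℝ)) := by
    norm_cast
  have hk : (-1 : ℝ) < 2 * k := by linarith [(Nat.cast_nonneg k : (0 : ℝ) ≤ k)]
  rw [h_even, integral_comp_abs (f := fun x ↦ x ^ (2 * k) * exp (-b * x ^ 2)), h_rpow,
    integral_rpow_mul_exp_neg_mul_rpow two_pos hk hb]
  ring_nf

lemma integral_even_pow_gaussianReal (v : ℝ≥0) (k : ℕ) :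
    ∫ x, x ^ (2 * k) ∂gaussianReal 0 v = (2 * k - 1 : ℕ)‼ * (v : ℝ) ^ k := by
  rcases eq_or_ne v 0 with rfl | hv
  · cases k <;> simp [gaussianReal_zero_var]
  have hv' : 0 < (2 * v : ℝ) := by positivity
  have h_pdf : ∀ x, gaussianPDFReal 0 v x • x ^ (2 * k)
      = (√(2 * π * v))⁻¹ * (x ^ (2 * k) * exp (-(2 * v : ℝ)⁻¹ * x ^ 2)) := fun x ↦ by
    rw [gaussianPDFReal, smul_eq_mul, sub_zero]; ring_nf
  have h_rpow : ((2 * v : ℝ)⁻¹) ^ (-(k + 1 / 2 : ℝ)) = (2 * v : ℝ) ^ k * √(2 * v) := by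
    rw [inv_rpow hv'.le, ← rpow_neg hv'.le, neg_neg, rpow_add hv', rpow_natCast, sqrt_eq_rpow]
  simp_rw [integral_gaussianReal_eq_integral_smul hv, h_pdf, integral_const_mul,
    integral_even_pow_mul_exp_neg_mul_sq (inv_pos.2 hv') k, h_rpow, Gamma_nat_add_half,
    mul_comm 2 π, mul_assoc π 2, sqrt_mul pi_nonneg]
  field_simp
  ring

lemma integral_sq_gaussianReal (v : ℝ≥0) : ∫ x, x ^ 2 ∂gaussianReal 0 v = v := by
  simpa using integral_even_pow_gaussianReal v 1

lemma integral_pow_four_gaussianReal (v : ℝ≥0) :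
    ∫ x, x ^ 4 ∂gaussianReal 0 v = 3 * (v : ℝ) ^ 2 := by
  simpa using integral_even_pow_gaussianReal v 2

lemma integrable_pow_gaussianReal (m : ℝ) (v : ℝ≥0) (n : ℕ) :
    Integrable (fun x : ℝ ↦ x ^ n) (gaussianReal m v) :=
  integrable_pow_of_mem_interior_integrableExpSet (X := fun x ↦ x) (by simp) n

section GaussianPlane

variable (v : ℝ≥0)

lemma integrable_sq_add_sq_gaussianReal_prod :
    Integrable (fun q : ℝ × ℝ ↦ q.1 ^ 2 + q.2 ^ 2) ((gaussianReal 0 v).prod (gaussianReal 0 v)) :=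
  ((integrable_pow_gaussianReal 0 v 2).comp_fst _).fun_add
    ((integrable_pow_gaussianReal 0 v 2).comp_snd _)

lemma integral_sq_add_sq_gaussianReal_prod :
    ∫ q : ℝ × ℝ, q.1 ^ 2 + q.2 ^ 2 ∂(gaussianReal 0 v).prod (gaussianReal 0 v) = 2 * v := by
  rw [integral_add ((integrable_pow_gaussianReal 0 v 2).comp_fst _)
      ((integrable_pow_gaussianReal 0 v 2).comp_snd _), integral_fun_fst (fun x : ℝ ↦ x ^ 2),
    integral_fun_snd (fun x : ℝ ↦ x ^ 2)]
  simp [integral_sq_gaussianReal, two_mul]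

lemma sq_add_sq_sq_eq (x y : ℝ) : (x ^ 2 + y ^ 2) ^ 2 = x ^ 4 + 2 * (x ^ 2 * y ^ 2) + y ^ 4 := by
  ring

lemma integrable_sq_add_sq_sq_gaussianReal_prod :
    Integrable (fun q : ℝ × ℝ ↦ (q.1 ^ 2 + q.2 ^ 2) ^ 2)
      ((gaussianReal 0 v).prod (gaussianReal 0 v)) := by
  simp_rw [sq_add_sq_sq_eq]
  exact (((integrable_pow_gaussianReal 0 v 4).comp_fst _).fun_add
    (((integrable_pow_gaussianReal 0 v 2).mul_prod
      (integrable_pow_gaussianReal 0 v 2)).const_mul 2)).fun_add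
    ((integrable_pow_gaussianReal 0 v 4).comp_snd _)

lemma integral_sq_add_sq_sq_gaussianReal_prod :
    ∫ q : ℝ × ℝ, (q.1 ^ 2 + q.2 ^ 2) ^ 2 ∂(gaussianReal 0 v).prod (gaussianReal 0 v)
      = 8 * (v : ℝ) ^ 2 := by
  have h_fst := (integrable_pow_gaussianReal 0 v 4).comp_fst (gaussianReal 0 v)
  have h_snd := (integrable_pow_gaussianReal 0 v 4).comp_snd (gaussianReal 0 v)
  have h_mixed := ((integrable_pow_gaussianReal 0 v 2).mul_prod
    (integrable_pow_gaussianReal 0 v 2)).const_mul 2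
  simp_rw [sq_add_sq_sq_eq]
  rw [integral_add (h_fst.fun_add h_mixed) h_snd, integral_add h_fst h_mixed, integral_const_mul,
    integral_prod_mul (fun x : ℝ ↦ x ^ 2) (fun x : ℝ ↦ x ^ 2),
    integral_fun_fst (fun x : ℝ ↦ x ^ 4), integral_fun_snd (fun x : ℝ ↦ x ^ 4)]
  simp [integral_sq_gaussianReal, integral_pow_four_gaussianReal]
  ring

end GaussianPlane

section ComplexGaussian

instance isProbabilityMeasure_complexGaussian (β : ℝ) :
    IsProbabilityMeasure (complexGaussian β) :=
  Measure.isProbabilityMeasure_map (by fun_prop)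

lemma normSq_ofReal_add_I_mul_ofReal (x y : ℝ) :
    Complex.normSq (x + Complex.I * y) = x ^ 2 + y ^ 2 := by
  rw [mul_comm, Complex.normSq_add_mul_I]

variable (β : ℝ) (k : ℕ)

lemma integral_normSq_pow_complexGaussian :
    ∫ z, Complex.normSq z ^ k ∂complexGaussian β = ∫ q : ℝ × ℝ, (q.1 ^ 2 + q.2 ^ 2) ^ k
      ∂(gaussianReal 0 (β / 2).toNNReal).prod (gaussianReal 0 (β / 2).toNNReal) := by
  rw [complexGaussian, integral_map (by fun_prop) (by fun_prop)]
  simp_rw [normSq_ofReal_add_I_mul_ofReal]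

lemma integrable_normSq_pow_complexGaussian_iff :
    Integrable (fun z ↦ Complex.normSq z ^ k) (complexGaussian β) ↔
      Integrable (fun q : ℝ × ℝ ↦ (q.1 ^ 2 + q.2 ^ 2) ^ k)
        ((gaussianReal 0 (β / 2).toNNReal).prod (gaussianReal 0 (β / 2).toNNReal)) := by
  rw [complexGaussian, integrable_map_measure (by fun_prop) (by fun_prop)]
  simp_rw [Function.comp_def, normSq_ofReal_add_I_mul_ofReal]

lemma integrable_normSq_complexGaussian : Integrable Complex.normSq (complexGaussian β) := by
  simpa using (integrable_normSq_pow_complexGaussian_iff β 1).2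
    (by simpa using integrable_sq_add_sq_gaussianReal_prod _)

lemma integrable_normSq_sq_complexGaussian :
    Integrable (fun z ↦ Complex.normSq z ^ 2) (complexGaussian β) :=
  (integrable_normSq_pow_complexGaussian_iff β 2).2 (integrable_sq_add_sq_sq_gaussianReal_prod _)

variable {β}

lemma integral_normSq_complexGaussian (hβ : 0 ≤ β) :
    ∫ z, Complex.normSq z ∂complexGaussian β = β := by
  have h := integral_normSq_pow_complexGaussian β 1
  simp only [pow_one] at h
  rw [h, integral_sq_add_sq_gaussianReal_prod, Real.coe_toNNReal _ (by positivity)]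
  ring

lemma integral_normSq_sq_complexGaussian (hβ : 0 ≤ β) :
    ∫ z, Complex.normSq z ^ 2 ∂complexGaussian β = 2 * β ^ 2 := by
  rw [integral_normSq_pow_complexGaussian, integral_sq_add_sq_sq_gaussianReal_prod,
    Real.coe_toNNReal _ (by positivity)]
  ring

end ComplexGaussian

lemma ProbabilityTheory.HasLaw.integrable_comp_iff {Ω 𝓧 E : Type*} [MeasurableSpace Ω]
    [MeasurableSpace 𝓧] [NormedAddCommGroup E] {X : Ω → 𝓧} {ν : Measure 𝓧} {μ : Measure Ω}
    (hX : HasLaw X ν μ) {f : 𝓧 → E} (hf : AEStronglyMeasurable f ν) :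
    Integrable (f ∘ X) μ ↔ Integrable f ν := by
  rw [← hX.map_eq] at hf ⊢
  exact (integrable_map_measure hf hX.aemeasurable).symm

section IndependentComplexGaussians

variable {Ω ι : Type*} [MeasurableSpace Ω] {μ : Measure Ω} {Z : ι → Ω → ℂ} {β : ι → ℝ}

lemma integrable_normSq_mul_normSq_of_iIndepFun
    (hZ : ∀ j, HasLaw (Z j) (complexGaussian (β j)) μ) (h_indep : iIndepFun Z μ) (j k : ι) :
    Integrable (fun ω ↦ Complex.normSq (Z j ω) * Complex.normSq (Z k ω)) μ := by
  have h_normSq : ∀ j, Integrable (Complex.normSq ∘ Z j) μ := fun j ↦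
    ((hZ j).integrable_comp_iff (by fun_prop)).2 (integrable_normSq_complexGaussian _)
  rcases eq_or_ne j k with rfl | hjk
  · simp_rw [← sq]
    exact ((hZ j).integrable_comp_iff (f := fun z ↦ Complex.normSq z ^ 2) (by fun_prop)).2
      (integrable_normSq_sq_complexGaussian _)
  · exact ((h_indep.indepFun hjk).comp Complex.continuous_normSq.measurable
      Complex.continuous_normSq.measurable).integrable_mul (h_normSq j) (h_normSq k)

lemma integral_normSq_mul_normSq_of_iIndepFun
    (hZ : ∀ j, HasLaw (Z j) (complexGaussian (β j)) μ) (h_indep : iIndepFun Z μ)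
    (hβ : ∀ j, 0 ≤ β j) [DecidableEq ι] (j k : ι) :
    ∫ ω, Complex.normSq (Z j ω) * Complex.normSq (Z k ω) ∂μ
      = β j * β k + if j = k then β k ^ 2 else 0 := by
  have h_normSq : ∀ j, ∫ ω, Complex.normSq (Z j ω) ∂μ = β j := fun j ↦
    ((hZ j).integral_comp (f := Complex.normSq) (by fun_prop)).trans
      (integral_normSq_complexGaussian (hβ j))
  have h_normSq_sq : ∀ j, ∫ ω, Complex.normSq (Z j ω) ^ 2 ∂μ = 2 * β j ^ 2 := fun j ↦
    ((hZ j).integral_comp (f := fun z ↦ Complex.normSq z ^ 2) (by fun_prop)).trans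
      (integral_normSq_sq_complexGaussian (hβ j))
  rcases eq_or_ne j k with rfl | hjk
  · simp only [← sq, h_normSq_sq, if_true]
    ring
  · rw [(h_indep.indepFun hjk).integral_fun_comp_mul_comp (hZ j).aemeasurable (hZ k).aemeasurable
      (by fun_prop) (by fun_prop), h_normSq, h_normSq, if_neg hjk, add_zero]

lemma integral_sum_mul_normSq_mul_normSq {κ : Type*} [Fintype ι] [Fintype κ]
    {G : Ω → Matrix ι κ ℂ} {β : κ → ℝ}
    (hG : ∀ q : ι × κ, HasLaw (fun ω ↦ G ω q.1 q.2) (complexGaussian (β q.2)) μ)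
    (h_indep : iIndepFun (fun (q : ι × κ) ω ↦ G ω q.1 q.2) μ) (hβ : ∀ i, 0 ≤ β i)
    (p : κ → ℝ) (n : κ) :
    ∫ ω, ∑ m, ∑ i, p i * (Complex.normSq (G ω m i) * Complex.normSq (G ω m n)) ∂μ
      = Fintype.card ι * β n * ((∑ i, p i * β i) + p n * β n) := by
  classical
  have h_int := integrable_normSq_mul_normSq_of_iIndepFun hG h_indep
  have h_val : ∀ m i, ∫ ω, Complex.normSq (G ω m i) * Complex.normSq (G ω m n) ∂μ
      = β i * β n + if i = n then β n ^ 2 else 0 := fun m i ↦ by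
    simpa using integral_normSq_mul_normSq_of_iIndepFun hG h_indep (fun q ↦ hβ q.2) (m, i) (m, n)
  rw [integral_finsetSum _ fun m _ ↦ integrable_finsetSum _ fun i _ ↦
    (h_int (m, i) (m, n)).const_mul (p i)]
  simp_rw [integral_finsetSum _ fun i _ ↦ (h_int (_, i) (_, n)).const_mul (p i),
    integral_const_mul]
  simp only [h_val, mul_add, mul_ite, mul_zero, Finset.sum_add_distrib, Finset.sum_ite_eq',
    Finset.mem_univ, if_true, ← mul_assoc, ← Finset.sum_mul, Finset.sum_const, Finset.card_univ,
    nsmul_eq_mul]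
  ring

end IndependentComplexGaussians

lemma star_dotProduct_diagonal_mulVec_eq_sum_normSq {ι κ : Type*} [Fintype ι] [Fintype κ]
    [DecidableEq ι] [DecidableEq κ] (A : Matrix ι κ ℂ) (p : κ → ℝ) (n : κ) :
    star (fun m ↦ A m n) ⬝ᵥ
        ((diagonal fun m ↦ (A * diagonal (fun i ↦ (p i : ℂ)) * Aᴴ) m m) *ᵥ fun m ↦ A m n)
      = ((∑ m, ∑ i, p i * (Complex.normSq (A m i) * Complex.normSq (A m n)) : ℝ) : ℂ) := by
  simp only [dotProduct, mulVec_diagonal, mul_apply, diagonal_apply, conjTranspose_apply,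
    mul_ite, mul_zero, Finset.sum_ite_eq', Finset.mem_univ, if_true, Pi.star_apply,
    RCLike.star_def, Complex.ofReal_sum, Complex.ofReal_mul, Complex.normSq_eq_conj_mul_self]
  refine Finset.sum_congr rfl fun m _ ↦ ?_
  rw [Finset.sum_mul, Finset.mul_sum]
  refine Finset.sum_congr rfl fun i _ ↦ ?_
  ring

theorem diag_quadratic_form_expectation_diagonal_general
    {Ω : Type*} [MeasurableSpace Ω] (μ : Measure Ω)
    (M K : ℕ)
    (β : Fin K → ℝ) (hβ : ∀ n, 0 < β n) (p : Fin K → ℝ)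
    (G : Ω → Matrix (Fin M) (Fin K) ℂ)
    (h_indep : iIndepFun
      (fun (q : Fin M × Fin K) ω => G ω q.1 q.2) μ)
    (h_dist : ∀ m n, μ.map (fun ω => G ω m n) = complexGaussian (β n))
    (n : Fin K) :
    ∫ ω, star (fun m => G ω m n) ⬝ᵥ
        ((Matrix.diagonal fun m =>
            (G ω * Matrix.diagonal (fun i => (p i : ℂ)) * (G ω)ᴴ) m m)
          *ᵥ (fun m => G ω m n)) ∂μ
      = (M : ℂ) * β n * ((∑ i, p i * β i) + p n * β n) := by
  have h_law : ∀ q : Fin M × Fin K,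
      HasLaw (fun ω ↦ G ω q.1 q.2) (complexGaussian (β q.2)) μ := fun q ↦
    ⟨aemeasurable_of_map_neZero (by rw [h_dist]; infer_instance), h_dist q.1 q.2⟩
  rw [integral_congr_ae (.of_forall fun ω ↦
      star_dotProduct_diagonal_mulVec_eq_sum_normSq (G ω) p n), integral_complex_ofReal,
    integral_sum_mul_normSq_mul_normSq h_law h_indep (fun i ↦ (hβ i).le), Fintype.card_fin]
  push_cast
  ring

/-- For an `M × K` random matrix `G` with independent entries,
entry `(m, n)` distributed `CN(0, βₙ)`, and `P = diag(p₁, …, p_K)`,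
`E[gₙᴴ · diag(G P Gᴴ) · gₙ] = M βₙ (∑ᵢ pᵢ βᵢ + pₙ βₙ)` for every column `gₙ` of `G`. -/
theorem diag_quadratic_form_expectation_diagonal
    {Ω : Type*} [MeasurableSpace Ω] (μ : Measure Ω) [IsProbabilityMeasure μ]
    (M K : ℕ) (hM : 1 ≤ M) (hK : 1 ≤ K)
    (β : Fin K → ℝ) (hβ : ∀ n, 0 < β n) (p : Fin K → ℝ) (hp : ∀ n, 0 ≤ p n)
    (G : Ω → Matrix (Fin M) (Fin K) ℂ)
    (h_indep : iIndepFun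
      (fun (q : Fin M × Fin K) ω => G ω q.1 q.2) μ)
    (h_dist : ∀ m n, μ.map (fun ω => G ω m n) = complexGaussian (β n))
    (n : Fin K) :
    ∫ ω, star (fun m => G ω m n) ⬝ᵥ
        ((Matrix.diagonal fun m =>
            (G ω * Matrix.diagonal (fun i => (p i : ℂ)) * (G ω)ᴴ) m m)
          *ᵥ (fun m => G ω m n)) ∂μ
      = (M : ℂ) * β n * ((∑ i, p i * β i) + p n * β n) :=
  diag_quadratic_form_expectation_diagonal_general μ M K β hβ p G h_indep h_dist n
end

section
/- Fix an integer K ≥ 1, positive reals β_SR,1,…,β_SR,K and β_RD,1,…,β_RD,K, E_R > 0, k ∈ {1,…,K}, and t ∈ (0,1]. For E_S > 0 define ν(E_S) = E_S E_R t² / [ E_S t X + Y + E_R t Z ] and ν_p(E_S) = E_S E_R / [ E_S X + Y + E_R Z ], where X = ∑_{i=1}^K β_SR,i² β_RD,i/(β_SR,k² β_RD,k²), Y = (∑_{m=1}^K β_SR,m β_RD,m)/(β_SR,k² β_RD,k²), and Z = 1/β_SR,k. Then lim_{E_S → 0⁺} log(1+ν(E_S)) / log(1+ν_p(E_S)) =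 t² ( E_R β_SR,k β_RD,k² + ∑_{m=1}^K β_SR,m β_RD,m ) / ( t E_R β_SR,k β_RD,k² + ∑_{m=1}^K β_SR,m β_RD,m ). -/
/-!
Since `log (1 + x) ~ x` as `x → 0` and both SINRs tend to `0` as `E_S → 0`, the rate ratio has
the limit of `ν / ν_p = t² (E_S X + Y + E_R Z) / (E_S t X + Y + E_R t Z)`, which is continuous
at `E_S = 0` with value `t² (Y + E_R Z) / (Y + E_R t Z)`.
-/

open Filter Topology Asymptotics Real

lemma isEquivalent_log_one_add : (fun x : ℝ => log (1 + x)) ~[𝓝 0] fun x => x := by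
  have h : HasDerivAt (fun x : ℝ => log (1 + x)) 1 0 := by
    simpa using ((hasDerivAt_id (0 : ℝ)).const_add 1).log (by norm_num)
  simpa [IsEquivalent, Pi.sub_def] using h.isLittleO

lemma tendsto_log_one_add_div_log_one_add {α : Type*} {l : Filter α} {f g : α → ℝ} {L : ℝ}
    (hf : Tendsto f l (𝓝 0)) (hg : Tendsto g l (𝓝 0))
    (hfg : Tendsto (fun x => f x / g x) l (𝓝 L)) :
    Tendsto (fun x => log (1 + f x) / log (1 + g x)) l (𝓝 L) :=
  ((isEquivalent_log_one_add.comp_tendsto hf).div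
    (isEquivalent_log_one_add.comp_tendsto hg)).symm.tendsto_nhds hfg

lemma sinr_div_sinr_eq {s E t X Y Z : ℝ} (hs : s ≠ 0) (hE : E ≠ 0) :
    s * E * t ^ 2 / (s * t * X + Y + E * t * Z) / (s * E / (s * X + Y + E * Z)) =
      t ^ 2 * (s * X + Y + E * Z) / (s * t * X + Y + E * t * Z) := by
  by_cases hD : s * t * X + Y + E * t * Z = 0
  · simp [hD]
  by_cases hD₁ : s * X + Y + E * Z = 0
  · simp [hD₁]
  field_simp

lemma tendsto_log_one_add_sinr_div_log_one_add_sinr {E t X Y Z : ℝ} (hE : E ≠ 0)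
    (hD : Y + E * t * Z ≠ 0) (hD₁ : Y + E * Z ≠ 0) :
    Tendsto (fun s => log (1 + s * E * t ^ 2 / (s * t * X + Y + E * t * Z)) /
        log (1 + s * E / (s * X + Y + E * Z))) (𝓝[≠] 0)
      (𝓝 (t ^ 2 * (Y + E * Z) / (Y + E * t * Z))) := by
  have hf : ContinuousAt (fun s => s * E * t ^ 2 / (s * t * X + Y + E * t * Z)) 0 :=
    ContinuousAt.div (by fun_prop) (by fun_prop) (by simpa using hD)
  have hg : ContinuousAt (fun s => s * E / (s * X + Y + E * Z)) 0 :=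
    ContinuousAt.div (by fun_prop) (by fun_prop) (by simpa using hD₁)
  have hq : ContinuousAt
      (fun s => t ^ 2 * (s * X + Y + E * Z) / (s * t * X + Y + E * t * Z)) 0 :=
    ContinuousAt.div (by fun_prop) (by fun_prop) (by simpa using hD)
  refine tendsto_log_one_add_div_log_one_add ?_ ?_ ?_
  · simpa using hf.tendsto.mono_left nhdsWithin_le_nhds
  · simpa using hg.tendsto.mono_left nhdsWithin_le_nhds
  · refine (tendsto_nhdsWithin_of_tendsto_nhds (by simpa using hq.tendsto)).congr' ?_
    filter_upwards [self_mem_nhdsWithin] with s hs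
    exact (sinr_div_sinr_eq hs hE).symm

theorem rate_ratio_low_source_power_general (K : ℕ)
    (βSR βRD : Fin K → ℝ) (hβSR : ∀ j, 0 < βSR j) (hβRD : ∀ j, 0 < βRD j)
    (ER : ℝ) (hER : 0 < ER) (k : Fin K) (t : ℝ) (ht : t ∈ Set.Ioc (0 : ℝ) 1) :
    Tendsto (fun ES : ℝ =>
        Real.log (1 + ES * ER * t ^ 2 /
            (ES * t * (∑ i, βSR i ^ 2 * βRD i / (βSR k ^ 2 * βRD k ^ 2))
              + (∑ m, βSR m * βRD m) / (βSR k ^ 2 * βRD k ^ 2)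
              + ER * t * (1 / βSR k))) /
          Real.log (1 + ES * ER /
            (ES * (∑ i, βSR i ^ 2 * βRD i / (βSR k ^ 2 * βRD k ^ 2))
              + (∑ m, βSR m * βRD m) / (βSR k ^ 2 * βRD k ^ 2)
              + ER * (1 / βSR k))))
      (nhdsWithin 0 (Set.Ioi 0))
      (nhds (t ^ 2 * (ER * βSR k * βRD k ^ 2 + ∑ m, βSR m * βRD m) /
        (t * ER * βSR k * βRD k ^ 2 + ∑ m, βSR m * βRD m))) := by
  obtain ⟨ht₀, -⟩ := ht
  have hβSRk := hβSR k
  have hβRDk := hβRD k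
  have hS : 0 < ∑ m, βSR m * βRD m :=
    Finset.sum_pos (fun m _ => mul_pos (hβSR m) (hβRD m)) ⟨k, Finset.mem_univ k⟩
  have hD : 0 < (∑ m, βSR m * βRD m) / (βSR k ^ 2 * βRD k ^ 2) + ER * t * (1 / βSR k) := by
    positivity
  have hD₁ : 0 < (∑ m, βSR m * βRD m) / (βSR k ^ 2 * βRD k ^ 2) + ER * (1 / βSR k) := by
    positivity
  convert (tendsto_log_one_add_sinr_div_log_one_add_sinr hER.ne' hD.ne' hD₁.ne').mono_left
    (nhdsGT_le_nhdsNE 0) using 2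
  field_simp
  ring

/-- **Proposition 1.** With `t = α + ρκ ∈ (0,1]`,
`ν(E_S) = E_S E_R t²/(E_S t X + Y + E_R t Z)` the asymptotic SINR of the
mixed-ADC/DAC system and `ν_p(E_S) = E_S E_R/(E_S X + Y + E_R Z)` that of the ideal
unquantized system, where `X = ∑ᵢ β_SR,i² β_RD,i/(β_SR,k² β_RD,k²)`,
`Y = (∑ₘ β_SR,m β_RD,m)/(β_SR,k² β_RD,k²)` and `Z = 1/β_SR,k`, the rate ratio
satisfies, as `E_S → 0⁺`,
`log(1+ν)/log(1+ν_p) → t² (E_R β_SR,k β_RD,k² + ∑ₘ β_SR,m β_RD,m)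
  / (t E_R β_SR,k β_RD,k² + ∑ₘ β_SR,m β_RD,m)`. -/
theorem rate_ratio_low_source_power (K : ℕ) (hK : 1 ≤ K)
    (βSR βRD : Fin K → ℝ) (hβSR : ∀ j, 0 < βSR j) (hβRD : ∀ j, 0 < βRD j)
    (ER : ℝ) (hER : 0 < ER) (k : Fin K) (t : ℝ) (ht : t ∈ Set.Ioc (0 : ℝ) 1) :
    Tendsto (fun ES : ℝ =>
        Real.log (1 + ES * ER * t ^ 2 /
            (ES * t * (∑ i, βSR i ^ 2 * βRD i / (βSR k ^ 2 * βRD k ^ 2))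
              + (∑ m, βSR m * βRD m) / (βSR k ^ 2 * βRD k ^ 2)
              + ER * t * (1 / βSR k))) /
          Real.log (1 + ES * ER /
            (ES * (∑ i, βSR i ^ 2 * βRD i / (βSR k ^ 2 * βRD k ^ 2))
              + (∑ m, βSR m * βRD m) / (βSR k ^ 2 * βRD k ^ 2)
              + ER * (1 / βSR k))))
      (nhdsWithin 0 (Set.Ioi 0))
      (nhds (t ^ 2 * (ER * βSR k * βRD k ^ 2 + ∑ m, βSR m * βRD m) /
        (t * ER * βSR k * βRD k ^ 2 + ∑ m, βSR m * βRD m))) :=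
  rate_ratio_low_source_power_general K βSR βRD hβSR hβRD ER hER k t ht
end
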